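/- arXiv:2402.03536 — 4 statements merged into one kernel-verified Lean document; each statement's English description precedes it below -/
import Mathlib

section
/- If a nilpotent endomorphism K of a vector space V with a symmetric bilinear form of signature (p,q), p ≤ q, is self-adjoint with respect to the form, then its index of nilpotency is at most 2p when p = q, and at most 2p+1 when p < q. -/
private lemma sumsq_zero' {k : ℕ} (t : Fin k → ℝ) (h : ∑ i, t i * t i = 0) : t = 0 := by
  funext i
  have h' := (Finset.sum_eq_zero_iff_of_nonneg
    (fun j _ => mul_self_nonneg (t j))).mp h i (Finset.mem_univ i)
  exact mul_self_eq_zero.mp h'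

/-- Let `V = ℝ^p × ℝ^q` carry the symmetric bilinear form of signature
`(p,q)` (with `p ≤ q`), `g(v,w) = Σ v₂ᵢ w₂ᵢ − Σ v₁ᵢ w₁ᵢ`. If `K` is a nilpotent
endomorphism of `V` which is self-adjoint with respect to `g`, then its index of
nilpotency is at most `2p` when `p = q`, and at most `2p + 1` when `p < q`. -/
theorem selfAdjoint_nilpotent_index_bound
    (p q : ℕ) (hpq : p ≤ q)
    (g : LinearMap.BilinForm ℝ ((Fin p → ℝ) × (Fin q → ℝ)))
    (hg : ∀ v w : (Fin p → ℝ) × (Fin q → ℝ),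
      g v w = (∑ i, v.2 i * w.2 i) - ∑ i, v.1 i * w.1 i)
    (K : ((Fin p → ℝ) × (Fin q → ℝ)) →ₗ[ℝ] ((Fin p → ℝ) × (Fin q → ℝ)))
    (hsa : ∀ v w, g (K v) w = g v (K w))
    (hnil : IsNilpotent K) :
    (p = q → K ^ (2 * p) = 0) ∧ (p < q → K ^ (2 * p + 1) = 0) := by
  classical
  have hex : ∃ n, K ^ n = 0 := hnil
  set m := Nat.find hex with hmdef
  have hKm : K ^ m = 0 := Nat.find_spec hex
  have hmin : ∀ k, k < m → K ^ k ≠ 0 := fun k hk => Nat.find_min hex hk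
  have key : ∀ nn, m ≤ nn → K ^ nn = 0 := by
    intro nn hn
    obtain ⟨k, rfl⟩ := Nat.exists_eq_add_of_le hn
    rw [pow_add, hKm, zero_mul]
  suffices hb : m ≤ 2 * p + 1 ∧ (p = q → m ≤ 2 * p) by
    exact ⟨fun h => key _ (hb.2 h), fun _ => key _ hb.1⟩
  rcases Nat.eq_zero_or_pos m with hm0 | hm1
  · exact ⟨by omega, fun _ => by omega⟩
  set n := m - 1 with hndef
  have hmn : m = n + 1 := by omega
  have hKn : K ^ n ≠ 0 := hmin n (by omega)
  -- symmetry
  have gsymm : ∀ v w, g v w = g w v := by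
    intro v w
    rw [hg, hg]
    simp [mul_comm]
  -- nondegeneracy
  have hnondeg : ∀ u : (Fin p → ℝ) × (Fin q → ℝ), (∀ x, g x u = 0) → u = 0 := by
    intro u hu
    have h1 := hu (-u.1, u.2)
    rw [hg] at h1
    have h2 : (∑ i, u.2 i * u.2 i) + ∑ i, u.1 i * u.1 i = 0 := by
      have : ∑ i, ((-u.1, u.2) : (Fin p → ℝ) × (Fin q → ℝ)).1 i * u.1 i
          = -∑ i, u.1 i * u.1 i := by
        simp [neg_mul]
      rw [this] at h1
      have h1' : (∑ i, ((-u.1, u.2) : (Fin p → ℝ) × (Fin q → ℝ)).2 i * u.2 i)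
          = ∑ i, u.2 i * u.2 i := rfl
      rw [h1'] at h1
      linarith
    have hs1 : (0:ℝ) ≤ ∑ i, u.1 i * u.1 i :=
      Finset.sum_nonneg fun i _ => mul_self_nonneg _
    have hs2 : (0:ℝ) ≤ ∑ i, u.2 i * u.2 i :=
      Finset.sum_nonneg fun i _ => mul_self_nonneg _
    have e1 : ∑ i, u.1 i * u.1 i = 0 := by linarith
    have e2 : ∑ i, u.2 i * u.2 i = 0 := by linarith
    exact Prod.ext (sumsq_zero' _ e1) (sumsq_zero' _ e2)
  -- pairing
  have hpair : ∀ (i : ℕ) (x y), g ((K ^ i) x) y = g x ((K ^ i) y) := by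
    intro i
    induction i with
    | zero => intro x y; simp
    | succ t ih =>
      intro x y
      have e1 : (K ^ (t + 1)) x = (K ^ t) (K x) := by
        rw [pow_succ]; rfl
      have e2 : (K ^ (t + 1)) y = K ((K ^ t) y) := by
        rw [pow_succ']; rfl
      rw [e1, ih (K x) y, hsa, ← e2]
  have hgram : ∀ (i j : ℕ) (x y), g ((K ^ i) x) ((K ^ j) y) = g x ((K ^ (i + j)) y) := by
    intro i j x y
    rw [hpair]
    congr 1
    rw [pow_add]
    rfl
  have hbig : ∀ k, m ≤ k → ∀ (x y : (Fin p → ℝ) × (Fin q → ℝ)), g x ((K ^ k) y) = 0 := by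
    intro k hk x y
    rw [key k hk]
    simp
  -- find v with g v (K^n v) ≠ 0
  have hv : ∃ v, g v ((K ^ n) v) ≠ 0 := by
    by_contra hcon
    push_neg at hcon
    have hz : ∀ x y, g x ((K ^ n) y) = 0 := by
      intro x y
      have h1 := hcon (x + y)
      have h2 := hcon x
      have h3 := hcon y
      have hxy : g y ((K ^ n) x) = g x ((K ^ n) y) := by
        rw [← hpair n y x, gsymm]
      simp only [map_add, LinearMap.add_apply] at h1
      linarith
    apply hKn
    apply LinearMap.ext
    intro y
    simp only [LinearMap.zero_apply]
    exact hnondeg _ fun x => hz x y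
  obtain ⟨v, ha⟩ := hv
  set a := g v ((K ^ n) v) with hadef
  -- cyclic independence
  have hindep : ∀ (s r : ℕ), s + r = m → ∀ c : Fin r → ℝ,
      (∑ i : Fin r, c i • (K ^ (s + (i : ℕ))) v) = 0 → ∀ i, c i = 0 := by
    intro s r hsr c hc
    have main : ∀ t : ℕ, ∀ i : Fin r, (i : ℕ) = t → c i = 0 := by
      intro t
      induction t using Nat.strong_induction_on with
      | _ t ih =>
        intro i hit
        have hir := i.isLt
        have hsi : s + (i : ℕ) ≤ n := by omega
        set d := n - (s + (i : ℕ)) with hd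
        have h0 : ∑ j : Fin r, c j * g ((K ^ (s + (j : ℕ))) v) ((K ^ d) v) = 0 := by
          have h0' := congrArg (fun w => g w ((K ^ d) v)) hc
          simpa [map_sum, LinearMap.sum_apply, map_smul, LinearMap.smul_apply,
            smul_eq_mul] using h0'
        rw [Finset.sum_eq_single i (fun j _ hji => by
          rcases lt_trichotomy (j : ℕ) (i : ℕ) with hlt | heq | hgt
          · rw [ih (j : ℕ) (by omega) j rfl, zero_mul]
          · exact absurd (Fin.ext heq) hji
          · have hjr := j.isLt
            rw [hgram, hbig _ (by omega), mul_zero])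
          (fun hnm => absurd (Finset.mem_univ i) hnm)] at h0
        rw [hgram] at h0
        have hexp : s + (i : ℕ) + d = n := by omega
        rw [hexp] at h0
        exact (mul_eq_zero.mp h0).resolve_right ha
    exact fun i => main (i : ℕ) i rfl
  -- expansion of g on combinations
  have expand : ∀ (s r : ℕ) (c : Fin r → ℝ),
      g (∑ i : Fin r, c i • (K ^ (s + (i : ℕ))) v) (∑ i : Fin r, c i • (K ^ (s + (i : ℕ))) v)
        = ∑ i : Fin r, ∑ j : Fin r,
            c i * c j * g ((K ^ (s + (i : ℕ))) v) ((K ^ (s + (j : ℕ))) v) := by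
    intro s r c
    simp only [map_sum, LinearMap.sum_apply, map_smul, LinearMap.smul_apply, smul_eq_mul]
    apply Finset.sum_congr rfl
    intro i _
    rw [Finset.mul_sum]
    apply Finset.sum_congr rfl
    intro j _
    rw [gsymm ((K ^ (s + (j : ℕ))) v) ((K ^ (s + (i : ℕ))) v)]
    ring
  -- claim 1 : m ≤ 2p+1
  have claim1 : m ≤ 2 * p + 1 := by
    by_contra hcon
    push_neg at hcon
    set s := (m + 1) / 2 with hs
    set r := m - s with hr
    have hsr : s + r = m := by omega
    have h2s : m ≤ s + s := by omega
    have hrp : p + 1 ≤ r := by omega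
    have hli : LinearIndependent ℝ (fun i : Fin r => ((K ^ (s + (i : ℕ))) v).1) := by
      rw [Fintype.linearIndependent_iff]
      intro c hc0
      set w := ∑ i : Fin r, c i • (K ^ (s + (i : ℕ))) v with hw
      have hw1 : w.1 = 0 := by
        rw [hw, Prod.fst_sum]
        simpa [Prod.smul_fst] using hc0
      have hww : g w w = 0 := by
        rw [hw, expand]
        apply Finset.sum_eq_zero
        intro i _
        apply Finset.sum_eq_zero
        intro j _
        rw [hgram, hbig _ (by omega), mul_zero]
      have hgww : (∑ i, w.2 i * w.2 i) - ∑ i, w.1 i * w.1 i = 0 := by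
        rw [← hg, hww]
      rw [hw1] at hgww
      simp only [Pi.zero_apply, mul_zero, Finset.sum_const_zero, sub_zero] at hgww
      have hw2 : w.2 = 0 := sumsq_zero' _ hgww
      have hw0 : w = 0 := Prod.ext hw1 hw2
      exact hindep s r hsr c (hw ▸ hw0)
    have hcard := hli.fintype_card_le_finrank
    simp only [Fintype.card_fin, Module.finrank_fintype_fun_eq_card] at hcard
    omega
  refine ⟨claim1, fun hpq2 => ?_⟩
  by_contra hcon
  have hm2p1 : m = 2 * p + 1 := by omega
  have hn2p : n = 2 * p := by omega
  set r := p + 1 with hrdef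
  have hsr : p + r = m := by omega
  have hgram2 : ∀ i j : Fin r, g ((K ^ (p + (i : ℕ))) v) ((K ^ (p + (j : ℕ))) v)
      = if (i : ℕ) = 0 ∧ (j : ℕ) = 0 then a else 0 := by
    intro i j
    rw [hgram]
    by_cases h : (i : ℕ) = 0 ∧ (j : ℕ) = 0
    · rw [if_pos h]
      have : p + (i : ℕ) + (p + (j : ℕ)) = n := by omega
      rw [this]
    · rw [if_neg h]
      exact hbig _ (by omega) v v
  have hquad : ∀ c : Fin r → ℝ,
      g (∑ i : Fin r, c i • (K ^ (p + (i : ℕ))) v) (∑ i : Fin r, c i • (K ^ (p + (i : ℕ))) v)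
        = c 0 * c 0 * a := by
    intro c
    rw [expand]
    rw [Finset.sum_eq_single (0 : Fin r) (fun i _ hi => by
        apply Finset.sum_eq_zero
        intro j _
        rw [hgram2, if_neg (fun hh => hi (Fin.ext hh.1)), mul_zero])
      (fun hnm => absurd (Finset.mem_univ _) hnm)]
    rw [Finset.sum_eq_single (0 : Fin r) (fun j _ hj => by
        rw [hgram2, if_neg (fun hh => hj (Fin.ext hh.2)), mul_zero])
      (fun hnm => absurd (Finset.mem_univ _) hnm)]
    rw [hgram2, if_pos ⟨rfl, rfl⟩]
  -- two cases on the sign of a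
  rcases ha.lt_or_gt with haneg | hapos
  · -- a < 0 : project to first factor
    have hli : LinearIndependent ℝ (fun i : Fin r => ((K ^ (p + (i : ℕ))) v).1) := by
      rw [Fintype.linearIndependent_iff]
      intro c hc0
      set w := ∑ i : Fin r, c i • (K ^ (p + (i : ℕ))) v with hw
      have hw1 : w.1 = 0 := by
        rw [hw, Prod.fst_sum]
        simpa [Prod.smul_fst] using hc0
      have hww : g w w = c 0 * c 0 * a := by rw [hw, hquad]
      have hgww : (∑ i, w.2 i * w.2 i) - ∑ i, w.1 i * w.1 i = c 0 * c 0 * a := by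
        rw [← hg, hww]
      rw [hw1] at hgww
      simp only [Pi.zero_apply, mul_zero, Finset.sum_const_zero, sub_zero] at hgww
      have hs2 : (0:ℝ) ≤ ∑ i, w.2 i * w.2 i :=
        Finset.sum_nonneg fun i _ => mul_self_nonneg _
      have hc0a : c 0 * c 0 * a ≤ 0 :=
        mul_nonpos_of_nonneg_of_nonpos (mul_self_nonneg _) haneg.le
      have hz2 : ∑ i, w.2 i * w.2 i = 0 := le_antisymm (by linarith) hs2
      have hw2 : w.2 = 0 := sumsq_zero' _ hz2
      have hw0 : w = 0 := Prod.ext hw1 hw2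
      exact hindep p r hsr c (hw ▸ hw0)
    have hcard := hli.fintype_card_le_finrank
    simp only [Fintype.card_fin, Module.finrank_fintype_fun_eq_card] at hcard
    omega
  · -- a > 0 : project to second factor
    have hli : LinearIndependent ℝ (fun i : Fin r => ((K ^ (p + (i : ℕ))) v).2) := by
      rw [Fintype.linearIndependent_iff]
      intro c hc0
      set w := ∑ i : Fin r, c i • (K ^ (p + (i : ℕ))) v with hw
      have hw2 : w.2 = 0 := by
        rw [hw, Prod.snd_sum]
        simpa [Prod.smul_snd] using hc0
      have hww : g w w = c 0 * c 0 * a := by rw [hw, hquad]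
      have hgww : (∑ i, w.2 i * w.2 i) - ∑ i, w.1 i * w.1 i = c 0 * c 0 * a := by
        rw [← hg, hww]
      rw [hw2] at hgww
      simp only [Pi.zero_apply, mul_zero, Finset.sum_const_zero, zero_sub] at hgww
      have hs1 : (0:ℝ) ≤ ∑ i, w.1 i * w.1 i :=
        Finset.sum_nonneg fun i _ => mul_self_nonneg _
      have hc0a : 0 ≤ c 0 * c 0 * a :=
        mul_nonneg (mul_self_nonneg _) hapos.le
      have hz1 : ∑ i, w.1 i * w.1 i = 0 := le_antisymm (by linarith) hs1
      have hw1 : w.1 = 0 := sumsq_zero' _ hz1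
      have hw0 : w = 0 := Prod.ext hw1 hw2
      exact hindep p r hsr c (hw ▸ hw0)
    have hcard := hli.fintype_card_le_finrank
    simp only [Fintype.card_fin, Module.finrank_fintype_fun_eq_card] at hcard
    omega
end

section
/- Consider a 4-dimensional vector space with basis e₁,e₂,e₃,e₄ and an antisymmetric bracket with only possibly nonzero structure constants C²₁₂, C²₃₄, C³₁₃, C³₁₄, C⁴₁₃, C⁴₁₄, C²₁₃, C²₁₄ (so that [e₁,e₂] = C²₁₂e₂, [e₃,e₄] = C²₃₄e₂, [e₁,e₃] = C²₁₃e₂ + C³₁₃e₃ + C⁴₁₃e₄, [e₁,e₄] = C²₁₄e₂ + C³₁₄e₃ + C⁴₁₄e₄). The Jacobi identity holds if and only if C²₃₄ · (C²₁₂ − C³₁₃ − C⁴₁₄) = 0. -/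
/-!
The Jacobiator of an alternating bracket is an alternating trilinear map, so it vanishes iff it
vanishes on the four basis triples `(eᵢ, eⱼ, eₖ)` with `i < j < k`. Three of them vanish for
every choice of the constants, and the Jacobiator of `(e₁, e₃, e₄)` is
`C²₃₄ (C²₁₂ − C³₁₃ − C⁴₁₄) e₂`.
-/

namespace LinearMap

variable {R M N : Type*} [CommRing R] [AddCommGroup M] [Module R M] [AddCommGroup N] [Module R N]

def jacobiator (μ : M →ₗ[R] M →ₗ[R] M) : M →ₗ[R] M →ₗ[R] M →ₗ[R] M :=
  mk₂ R (fun x y => μ x ∘ₗ μ y + μ y ∘ₗ μ.flip x + μ.flip (μ x y))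
    (fun _ _ _ => by ext; simp only [add_apply, comp_apply, flip_apply, map_add]; abel)
    (fun _ _ _ => by ext; simp)
    (fun _ _ _ => by ext; simp only [add_apply, comp_apply, flip_apply, map_add]; abel)
    (fun _ _ _ => by ext; simp)

@[simp]
theorem jacobiator_apply (μ : M →ₗ[R] M →ₗ[R] M) (x y z : M) :
    jacobiator μ x y z = μ x (μ y z) + μ y (μ z x) + μ z (μ x y) :=
  rfl

theorem jacobiator_eq_zero_iff (μ : M →ₗ[R] M →ₗ[R] M) :
    jacobiator μ = 0 ↔ ∀ x y z, μ x (μ y z) + μ y (μ z x) + μ z (μ x y) = 0 := by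
  simp only [LinearMap.ext_iff, jacobiator_apply, zero_apply]

namespace IsAlt

variable {μ : M →ₗ[R] M →ₗ[R] M} (hμ : μ.IsAlt)
include hμ

theorem jacobiator_self_left (x z : M) : jacobiator μ x x z = 0 := by
  rw [jacobiator_apply, ← map_add, ← hμ.neg x z, add_neg_cancel, map_zero, hμ, map_zero, add_zero]

theorem jacobiator_self_right (x y : M) : jacobiator μ x y y = 0 := by
  rw [jacobiator_apply, hμ, map_zero, zero_add, ← map_add, ← hμ.neg x y, neg_add_cancel, map_zero]

end IsAlt

theorem trilinear_swap₁₂ {J : M →ₗ[R] M →ₗ[R] M →ₗ[R] N} (hJ : ∀ x z, J x x z = 0)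
    (x y z : M) : J y x z = -J x y z := by
  have := hJ (x + y) z
  simp only [map_add, add_apply, hJ, zero_add, add_zero] at this
  exact eq_neg_of_add_eq_zero_left this

theorem trilinear_swap₂₃ {J : M →ₗ[R] M →ₗ[R] M →ₗ[R] N} (hJ : ∀ x y, J x y y = 0)
    (x y z : M) : J x z y = -J x y z := by
  have := hJ x (y + z)
  simp only [map_add, add_apply, hJ, zero_add, add_zero] at this
  exact eq_neg_of_add_eq_zero_left this

end LinearMap

theorem Module.Basis.trilinear_eq_zero_iff_of_lt {ι R M N : Type*} [LinearOrder ι] [CommRing R]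
    [AddCommGroup M] [Module R M] [AddCommGroup N] [Module R N] (b : Basis ι R M)
    {J : M →ₗ[R] M →ₗ[R] M →ₗ[R] N} (h₁₂ : ∀ x z, J x x z = 0) (h₂₃ : ∀ x y, J x y y = 0) :
    J = 0 ↔ ∀ i j k, i < j → j < k → J (b i) (b j) (b k) = 0 := by
  open LinearMap in
  refine ⟨fun h _ _ _ _ _ => by simp [h], fun h => ?_⟩
  have h₁₃ (x y : M) : J x y x = 0 := by rw [trilinear_swap₂₃ h₂₃, h₁₂, neg_zero]
  have of_lt (i j k : ι) (hij : i < j) : J (b i) (b j) (b k) = 0 := by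
    rcases lt_trichotomy k i with hki | rfl | hik
    · rw [trilinear_swap₂₃ h₂₃, trilinear_swap₁₂ h₁₂, h k i j hki hij, neg_zero, neg_zero]
    · exact h₁₃ _ _
    rcases lt_trichotomy k j with hkj | rfl | hjk
    · rw [trilinear_swap₂₃ h₂₃, h i k j hik hkj, neg_zero]
    · exact h₂₃ _ _
    · exact h i j k hij hjk
  refine b.ext fun i => ext_basis b b fun j k => ?_
  rcases lt_trichotomy i j with hij | rfl | hji
  · simpa using of_lt i j k hij
  · simpa using h₁₂ (b i) (b k)
  · simpa [trilinear_swap₁₂ h₁₂ (b j)] using of_lt j i k hji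

theorem Fin.forall_lt_lt_four {P : Fin 4 → Fin 4 → Fin 4 → Prop} :
    (∀ i j k, i < j → j < k → P i j k) ↔ P 0 1 2 ∧ P 0 1 3 ∧ P 0 2 3 ∧ P 1 2 3 := by
  refine ⟨fun h => ⟨h 0 1 2 (by decide) (by decide), h 0 1 3 (by decide) (by decide),
    h 0 2 3 (by decide) (by decide), h 1 2 3 (by decide) (by decide)⟩, ?_⟩
  rintro ⟨h012, h013, h023, h123⟩ i j k hij hjk
  fin_cases i <;> fin_cases j <;> fin_cases k <;> first | assumption | simp_all

/-- On a 4-dimensional space with basis `e₁,e₂,e₃,e₄`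
(`b 0 = e₁`, …, `b 3 = e₄`), consider an antisymmetric bracket with only possibly
nonzero structure constants `C²₁₂, C²₃₄, C³₁₃, C³₁₄, C⁴₁₃, C⁴₁₄, C²₁₃, C²₁₄`:
`⁅e₁,e₂⁆ = C²₁₂e₂`, `⁅e₃,e₄⁆ = C²₃₄e₂`, `⁅e₁,e₃⁆ = C²₁₃e₂ + C³₁₃e₃ + C⁴₁₃e₄`,
`⁅e₁,e₄⁆ = C²₁₄e₂ + C³₁₄e₃ + C⁴₁₄e₄`. The Jacobi identity holds if and only if
`C²₃₄ · (C²₁₂ − C³₁₃ − C⁴₁₄) = 0`. -/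
theorem dim4_typeIII_jacobi_iff
    (V : Type*) [AddCommGroup V] [Module ℝ V]
    (b : Module.Basis (Fin 4) ℝ V)
    (μ : V →ₗ[ℝ] V →ₗ[ℝ] V)
    (halt : ∀ x y : V, μ x y = - μ y x)
    (C212 C234 C313 C314 C413 C414 C213 C214 : ℝ)
    (h12 : μ (b 0) (b 1) = C212 • b 1)
    (h34 : μ (b 2) (b 3) = C234 • b 1)
    (h13 : μ (b 0) (b 2) = C213 • b 1 + C313 • b 2 + C413 • b 3)
    (h14 : μ (b 0) (b 3) = C214 • b 1 + C314 • b 2 + C414 • b 3)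
    (h23 : μ (b 1) (b 2) = 0)
    (h24 : μ (b 1) (b 3) = 0) :
    (∀ x y z : V, μ x (μ y z) + μ y (μ z x) + μ z (μ x y) = 0) ↔
      C234 * (C212 - C313 - C414) = 0 := by
  have : IsAddTorsionFree V := .of_isTorsionFree ℝ V
  have hμ : μ.IsAlt := fun x => self_eq_neg.mp (halt x x)
  have h43 : μ (b 3) (b 2) = -(C234 • b 1) := by rw [← hμ.neg, h34]
  have h31 : μ (b 2) (b 0) = -(C213 • b 1 + C313 • b 2 + C413 • b 3) := by rw [← hμ.neg, h13]
  have h41 : μ (b 3) (b 0) = -(C214 • b 1 + C314 • b 2 + C414 • b 3) := by rw [← hμ.neg, h14]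
  have h32 : μ (b 2) (b 1) = 0 := by rw [← hμ.neg, h23, neg_zero]
  have h42 : μ (b 3) (b 1) = 0 := by rw [← hμ.neg, h24, neg_zero]
  have J012 : μ.jacobiator (b 0) (b 1) (b 2) = 0 := by
    simp [h12, h23, h31, h32, h24, hμ.self_eq_zero]
  have J013 : μ.jacobiator (b 0) (b 1) (b 3) = 0 := by
    simp [h12, h24, h41, h23, h42, hμ.self_eq_zero]
  have J023 : μ.jacobiator (b 0) (b 2) (b 3) = (C234 * (C212 - C313 - C414)) • b 1 := by
    simp only [LinearMap.jacobiator_apply, h34, h41, h13, h12, h32, h42, h43, hμ.self_eq_zero,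
      map_add, map_neg, map_smul, smul_zero, smul_neg, neg_zero, neg_add_rev, add_zero, zero_add]
    module
  have J123 : μ.jacobiator (b 1) (b 2) (b 3) = 0 := by
    simp [h34, h42, h23, hμ.self_eq_zero]
  rw [← μ.jacobiator_eq_zero_iff, b.trilinear_eq_zero_iff_of_lt hμ.jacobiator_self_left
    hμ.jacobiator_self_right, Fin.forall_lt_lt_four, J012, J013, J023, J123]
  simp [b.ne_zero]
end

section
/- Let g be a Lie algebra with basis e₁,…,e_n (n ≥ 4, indices i ∈ {5,…,n}) whose only possibly nonzero structure constants lie in the set {C³₁₄, C²₄ᵢ, C³₁ᵢ, Cⁱ₁₄, C²₄₁, C²₁ᵢ, C²ᵢⱼ, Cⁱ₁ⱼ, C²₁₂, C²₃₄, C³₁₃, C⁴₁₄, C²₁₃, Cⁱ₁₃, C⁴₁ᵢ, C²₃ᵢ, C⁴ᵢⱼ, Cⁱ₃ⱼ, C⁴₃₄, C⁴₁₂, C¹₁₃, C²₂₃, C⁴₁₃, C⁴₃ᵢ, C⁴₂₃} but with C³₁₄ = C¹₁₃ = C⁴₃₄ = C²₃₂ = 0 and additionally only those of boost weight satisfying 2b₁+b₂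 ≤ −1 (case [2,1/2]) nonzero. Then the derived series satisfies g₁ = [g,g] ⊆ span{e₂,e₃,e₄,e₅,…,e_n}, g₂ = [g₁,g₁] ⊆ span{e₂,e₄}, [g₁,g₂] ⊆ span{e₂}, [g₁,[g₁,g₂]] = 0; in particular g is solvable. -/
/-!
Give the frame vectors the depths `b 0 ↦ 0`, `b 1 ↦ 3`, `b 2 ↦ 1`, `b 3 ↦ 2`, `b i ↦ 1` (`i ≥ 4`),
and let `F k` be the span of the frame vectors of depth at least `k`. The allowed structure
constants say that every bracket lies in `F 1` and that the bracket of two frame vectors of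
positive depths `p, q` lies in `F (p + q)`; so `[F p, F q] ⊆ F (p + q)` for `p, q ≥ 1`. Hence
`g₁ ⊆ F 1`, `g₂ ⊆ F 2`, `[g₁, g₂] ⊆ F 3` and `[g₁, [g₁, g₂]] ⊆ F 4 = 0`, and since the fourth
derived ideal lies in `[g₁, [g₁, g₂]]`, `g` is solvable.
-/

section Bracket

open Submodule LieAlgebra

variable {R L : Type*} [CommRing R] [LieRing L] [LieAlgebra R L]

theorem lie_mem_of_mem_span {s t : Set L} {P : Submodule R L}
    (h : ∀ x ∈ s, ∀ y ∈ t, ⁅x, y⁆ ∈ P) {x y : L} (hx : x ∈ span R s) (hy : y ∈ span R t) :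
    ⁅x, y⁆ ∈ P := by
  have hxy := apply_mem_map₂ (LieModule.toEnd R L L : L →ₗ[R] L →ₗ[R] L) hx hy
  rw [map₂_span_span] at hxy
  refine span_le.mpr ?_ hxy
  rintro _ ⟨x, hx, y, hy, rfl⟩
  exact h x hx y hy

theorem lieIdeal_lie_le {I J : LieIdeal R L} {P : Submodule R L}
    (h : ∀ x ∈ I, ∀ y ∈ J, ⁅x, y⁆ ∈ P) : LieSubmodule.toSubmodule ⁅I, J⁆ ≤ P := by
  rw [LieSubmodule.lieIdeal_oper_eq_linear_span', span_le]
  rintro _ ⟨x, hx, y, hy, rfl⟩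
  exact h x hx y hy

theorem derivedSeries_one_le_of_lie_basis_mem {ι : Type*} (b : Module.Basis ι R L)
    {P : Submodule R L} (h : ∀ i j, ⁅b i, b j⁆ ∈ P) :
    LieSubmodule.toSubmodule (derivedSeries R L 1) ≤ P :=
  lieIdeal_lie_le fun x _ y _ ↦ lie_mem_of_mem_span (s := Set.range b) (t := Set.range b)
    (by rintro _ ⟨i, rfl⟩ _ ⟨j, rfl⟩; exact h i j) (b.span_eq ▸ mem_top) (b.span_eq ▸ mem_top)

theorem derivedSeries_four_le :
    derivedSeries R L 4 ≤ ⁅derivedSeries R L 1, ⁅derivedSeries R L 1, derivedSeries R L 2⁆⁆ := by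
  have h21 : derivedSeries R L 2 ≤ derivedSeries R L 1 := derivedSeriesOfIdeal_succ_le _ 1
  have h31 : derivedSeries R L 3 ≤ derivedSeries R L 1 :=
    derivedSeriesOfIdeal_antitone _ (by norm_num)
  have h3 : derivedSeries R L 3 ≤ ⁅derivedSeries R L 1, derivedSeries R L 2⁆ :=
    LieSubmodule.mono_lie h21 le_rfl
  exact LieSubmodule.mono_lie h31 h3

end Bracket

section DepthFiltration

open Submodule LieAlgebra

variable (R : Type*) {L ι : Type*} [CommRing R] [LieRing L] [LieAlgebra R L]

def depthFiltration (v : ι → L) (d : ι → ℕ) (k : ℕ) : Submodule R L :=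
  span R (v '' {i | k ≤ d i})

variable {R} {v : ι → L} {d : ι → ℕ}

theorem depthFiltration_antitone : Antitone (depthFiltration R v d) :=
  fun _ _ hkl ↦ span_mono <| Set.image_mono fun _ hi ↦ le_trans hkl hi

theorem mem_depthFiltration {i : ι} {k : ℕ} (h : k ≤ d i) : v i ∈ depthFiltration R v d k :=
  subset_span ⟨i, h, rfl⟩

theorem depthFiltration_eq_bot {k : ℕ} (h : ∀ i, d i < k) : depthFiltration R v d k = ⊥ := by
  simp [depthFiltration, fun i ↦ (h i).not_ge]

theorem lie_mem_depthFiltration_add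
    (hv : ∀ i j, 1 ≤ d i → 1 ≤ d j → ⁅v i, v j⁆ ∈ depthFiltration R v d (d i + d j))
    {k l : ℕ} (hk : 1 ≤ k) (hl : 1 ≤ l) {x y : L}
    (hx : x ∈ depthFiltration R v d k) (hy : y ∈ depthFiltration R v d l) :
    ⁅x, y⁆ ∈ depthFiltration R v d (k + l) := by
  refine lie_mem_of_mem_span ?_ hx hy
  rintro _ ⟨i, hi, rfl⟩ _ ⟨j, hj, rfl⟩
  exact depthFiltration_antitone (add_le_add hi hj) (hv i j (hk.trans hi) (hl.trans hj))

theorem lie_mem_depthFiltration_one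
    (h₀ : ∀ i j, d i = 0 → ⁅v i, v j⁆ ∈ depthFiltration R v d 1)
    (hv : ∀ i j, 1 ≤ d i → 1 ≤ d j → ⁅v i, v j⁆ ∈ depthFiltration R v d (d i + d j))
    (i j : ι) : ⁅v i, v j⁆ ∈ depthFiltration R v d 1 := by
  rcases Nat.eq_zero_or_pos (d i) with hi | hi
  · exact h₀ i j hi
  rcases Nat.eq_zero_or_pos (d j) with hj | hj
  · rw [← lie_skew]
    exact neg_mem (h₀ j i hj)
  · exact depthFiltration_antitone (by omega) (hv i j hi hj)

theorem lie_mem_depthFiltration_add_of_lt [LinearOrder ι]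
    (hv : ∀ i j, i < j → 1 ≤ d i → 1 ≤ d j → ⁅v i, v j⁆ ∈ depthFiltration R v d (d i + d j))
    (i j : ι) (hi : 1 ≤ d i) (hj : 1 ≤ d j) : ⁅v i, v j⁆ ∈ depthFiltration R v d (d i + d j) := by
  rcases lt_trichotomy i j with hij | rfl | hij
  · exact hv i j hij hi hj
  · rw [lie_self]
    exact zero_mem _
  · rw [← lie_skew, add_comm]
    exact neg_mem (hv j i hij hj hi)

theorem derivedSeries_le_depthFiltration (b : Module.Basis ι R L)
    (h₀ : ∀ i j, d i = 0 → ⁅b i, b j⁆ ∈ depthFiltration R b d 1)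
    (hv : ∀ i j, 1 ≤ d i → 1 ≤ d j → ⁅b i, b j⁆ ∈ depthFiltration R b d (d i + d j)) :
    LieSubmodule.toSubmodule (derivedSeries R L 1) ≤ depthFiltration R b d 1 ∧
    LieSubmodule.toSubmodule (derivedSeries R L 2) ≤ depthFiltration R b d 2 ∧
    LieSubmodule.toSubmodule ⁅derivedSeries R L 1, derivedSeries R L 2⁆ ≤
      depthFiltration R b d 3 ∧
    LieSubmodule.toSubmodule
        ⁅derivedSeries R L 1, ⁅derivedSeries R L 1, derivedSeries R L 2⁆⁆ ≤
      depthFiltration R b d 4 := by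
  have h₁ := derivedSeries_one_le_of_lie_basis_mem b (lie_mem_depthFiltration_one h₀ hv)
  have h₂ : LieSubmodule.toSubmodule (derivedSeries R L 2) ≤ depthFiltration R b d 2 :=
    lieIdeal_lie_le fun x hx y hy ↦
      lie_mem_depthFiltration_add (k := 1) (l := 1) hv le_rfl le_rfl (h₁ hx) (h₁ hy)
  have h₃ : LieSubmodule.toSubmodule ⁅derivedSeries R L 1, derivedSeries R L 2⁆ ≤
      depthFiltration R b d 3 :=
    lieIdeal_lie_le fun x hx y hy ↦
      lie_mem_depthFiltration_add (k := 1) (l := 2) hv le_rfl (by norm_num) (h₁ hx) (h₂ hy)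
  refine ⟨h₁, h₂, h₃, lieIdeal_lie_le fun x hx y hy ↦ ?_⟩
  exact lie_mem_depthFiltration_add (k := 1) (l := 3) hv le_rfl (by norm_num) (h₁ hx) (h₃ hy)

end DepthFiltration

section Frame

open Submodule

def frameDepth : ℕ → ℕ
  | 0 => 0
  | 1 => 3
  | 2 => 1
  | 3 => 2
  | _ => 1

theorem frameDepth_of_four_le {m : ℕ} (h : 4 ≤ m) : frameDepth m = 1 := by
  obtain ⟨k, rfl⟩ := Nat.exists_eq_add_of_le' h
  rfl

theorem eq_zero_of_frameDepth_eq_zero {m : ℕ} (h : frameDepth m = 0) : m = 0 := by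
  unfold frameDepth at h
  split at h <;> simp_all

theorem frameDepth_lt_four (m : ℕ) : frameDepth m < 4 := by
  unfold frameDepth
  split <;> norm_num

theorem Fin.frame_cases {n : ℕ} (i : Fin (n + 4)) :
    i = ⟨0, by omega⟩ ∨ i = ⟨1, by omega⟩ ∨ i = ⟨2, by omega⟩ ∨ i = ⟨3, by omega⟩ ∨
      4 ≤ (i : ℕ) := by
  rcases i with ⟨_ | _ | _ | _ | m, hm⟩ <;> simp

variable {R L : Type*} [CommRing R] [LieRing L] [LieAlgebra R L] {n : ℕ} {b : Fin (n + 4) → L}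

local notation "𝓕" => depthFiltration R b (fun i : Fin (n + 4) ↦ frameDepth i)

theorem frame_image_subset_depthFiltration : b '' {j : Fin (n + 4) | 4 ≤ (j : ℕ)} ⊆ 𝓕 1 := by
  rintro _ ⟨j, hj, rfl⟩
  exact mem_depthFiltration (frameDepth_of_four_le hj).ge

theorem frame_lie_mem_of_depth_eq_zero
    (h12 : ⁅b ⟨0, by omega⟩, b ⟨1, by omega⟩⁆ ∈ span R {b ⟨1, by omega⟩})
    (h13 : ⁅b ⟨0, by omega⟩, b ⟨2, by omega⟩⁆ ∈ span R
      ({b ⟨1, by omega⟩, b ⟨3, by omega⟩} ∪ b '' {j : Fin (n + 4) | 4 ≤ (j : ℕ)}))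
    (h14 : ⁅b ⟨0, by omega⟩, b ⟨3, by omega⟩⁆ ∈ span R
      ({b ⟨1, by omega⟩} ∪ b '' {j : Fin (n + 4) | 4 ≤ (j : ℕ)}))
    (h1i : ∀ i : Fin (n + 4), 4 ≤ (i : ℕ) → ⁅b ⟨0, by omega⟩, b i⁆ ∈ span R
      ({b ⟨1, by omega⟩, b ⟨2, by omega⟩, b ⟨3, by omega⟩} ∪ b '' {j : Fin (n + 4) | 4 ≤ (j : ℕ)}))
    (i j : Fin (n + 4)) (hi : frameDepth i = 0) : ⁅b i, b j⁆ ∈ 𝓕 1 := by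
  obtain rfl : i = ⟨0, Nat.zero_lt_succ _⟩ := Fin.ext (eq_zero_of_frameDepth_eq_zero hi)
  have h₁ : b ⟨1, by omega⟩ ∈ 𝓕 1 := mem_depthFiltration (by simp [frameDepth])
  have h₂ : b ⟨2, by omega⟩ ∈ 𝓕 1 := mem_depthFiltration (by simp [frameDepth])
  have h₃ : b ⟨3, by omega⟩ ∈ 𝓕 1 := mem_depthFiltration (by simp [frameDepth])
  rcases Fin.frame_cases j with rfl | rfl | rfl | rfl | hj
  · rw [lie_self]
    exact zero_mem _
  · exact span_le.mpr (Set.singleton_subset_iff.mpr h₁) h12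
  · refine span_le.mpr (Set.union_subset ?_ frame_image_subset_depthFiltration) h13
    exact Set.insert_subset h₁ (Set.singleton_subset_iff.mpr h₃)
  · refine span_le.mpr (Set.union_subset ?_ frame_image_subset_depthFiltration) h14
    exact Set.singleton_subset_iff.mpr h₁
  · refine span_le.mpr (Set.union_subset ?_ frame_image_subset_depthFiltration) (h1i j hj)
    exact Set.insert_subset h₁ (Set.insert_subset h₂ (Set.singleton_subset_iff.mpr h₃))

theorem frame_lie_mem_add_of_lt
    (h23 : ⁅b ⟨1, by omega⟩, b ⟨2, by omega⟩⁆ = 0)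
    (h24 : ⁅b ⟨1, by omega⟩, b ⟨3, by omega⟩⁆ = 0)
    (h2i : ∀ i : Fin (n + 4), 4 ≤ (i : ℕ) → ⁅b ⟨1, by omega⟩, b i⁆ = 0)
    (h34 : ⁅b ⟨2, by omega⟩, b ⟨3, by omega⟩⁆ ∈ span R {b ⟨1, by omega⟩})
    (h3i : ∀ i : Fin (n + 4), 4 ≤ (i : ℕ) →
      ⁅b ⟨2, by omega⟩, b i⁆ ∈ span R {b ⟨1, by omega⟩, b ⟨3, by omega⟩})
    (h4i : ∀ i : Fin (n + 4), 4 ≤ (i : ℕ) → ⁅b ⟨3, by omega⟩, b i⁆ ∈ span R {b ⟨1, by omega⟩})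
    (hij : ∀ i j : Fin (n + 4), 4 ≤ (i : ℕ) → 4 ≤ (j : ℕ) → ⁅b i, b j⁆ ∈ span R {b ⟨1, by omega⟩})
    (i j : Fin (n + 4)) (hlt : i < j) (hi : 1 ≤ frameDepth i) :
    ⁅b i, b j⁆ ∈ 𝓕 (frameDepth i + frameDepth j) := by
  have h₁ (k : ℕ) (hk : k ≤ 3) : span R {b ⟨1, by omega⟩} ≤ 𝓕 k :=
    span_le.mpr (Set.singleton_subset_iff.mpr (mem_depthFiltration (by simpa [frameDepth])))
  have h₃ : b ⟨3, by omega⟩ ∈ 𝓕 2 := mem_depthFiltration (by simp [frameDepth])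
  rcases Fin.frame_cases i with rfl | rfl | rfl | rfl | hi4
  · simp [frameDepth] at hi
  · rcases Fin.frame_cases j with rfl | rfl | rfl | rfl | hj
    · simp at hlt
    · simp at hlt
    · rw [h23]
      exact zero_mem _
    · rw [h24]
      exact zero_mem _
    · rw [h2i j hj]
      exact zero_mem _
  · rcases Fin.frame_cases j with rfl | rfl | rfl | rfl | hj
    · simp at hlt
    · simp at hlt
    · simp at hlt
    · exact h₁ 3 le_rfl h34
    · rw [frameDepth_of_four_le hj]
      refine span_le.mpr ?_ (h3i j hj)
      exact Set.insert_subset (span_le.mp (h₁ 2 (by omega)) rfl) (Set.singleton_subset_iff.mpr h₃)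
  · have hj : 4 ≤ (j : ℕ) := Fin.lt_def.mp hlt
    rw [frameDepth_of_four_le hj]
    exact h₁ 3 le_rfl (h4i j hj)
  · have hj : 4 ≤ (j : ℕ) := (Fin.lt_def.mp hlt).le.trans' hi4
    rw [frameDepth_of_four_le hi4, frameDepth_of_four_le hj]
    exact h₁ 2 (by omega) (hij i j hi4 hj)

theorem frame_depthFiltration_one_le :
    𝓕 1 ≤ span R ({b ⟨1, by omega⟩, b ⟨2, by omega⟩, b ⟨3, by omega⟩} ∪
      b '' {j : Fin (n + 4) | 4 ≤ (j : ℕ)}) := by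
  refine span_mono ?_
  rintro _ ⟨i, hi, rfl⟩
  rcases Fin.frame_cases i with rfl | rfl | rfl | rfl | hi4
  · simp [frameDepth] at hi
  · simp
  · simp
  · simp
  · exact Or.inr ⟨i, hi4, rfl⟩

theorem frame_depthFiltration_two_le :
    𝓕 2 ≤ span R {b ⟨1, by omega⟩, b ⟨3, by omega⟩} := by
  refine span_mono ?_
  rintro _ ⟨i, hi, rfl⟩
  rcases Fin.frame_cases i with rfl | rfl | rfl | rfl | hi4
  · simp [frameDepth] at hi
  · simp
  · simp [frameDepth] at hi
  · simp
  · simp [frameDepth_of_four_le hi4] at hi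

theorem frame_depthFiltration_three_le : 𝓕 3 ≤ span R {b ⟨1, by omega⟩} := by
  refine span_mono ?_
  rintro _ ⟨i, hi, rfl⟩
  rcases Fin.frame_cases i with rfl | rfl | rfl | rfl | hi4
  · simp [frameDepth] at hi
  · simp
  · simp [frameDepth] at hi
  · simp [frameDepth] at hi
  · simp [frameDepth_of_four_le hi4] at hi

theorem frame_depthFiltration_four : 𝓕 4 = ⊥ :=
  depthFiltration_eq_bot fun i ↦ frameDepth_lt_four i

end Frame

/-- case [2,1/2] in signature (2,2+k). Let `g` be a Lie algebra with
null-frame basis `e₁,e₂,e₃,e₄,eᵢ` (`b 0 = e₁`, …, `b 3 = e₄`, and `b i = e_{i+1}` for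
`i ≥ 4`) whose structure constants are supported only on the boost weights allowed in
case [2,1/2] (in particular `C³₁₄ = C¹₁₃ = C⁴₃₄ = C²₃₂ = 0`, and all weight `(0,−1)` and
`(1,−2)` constants vanish). Then `g₁ = [g,g] ⊆ span{e₂,e₃,e₄,e₅,…}`,
`g₂ = [g₁,g₁] ⊆ span{e₂,e₄}`, `⁅g₁,g₂⁆ ⊆ span{e₂}`, `⁅g₁,⁅g₁,g₂⁆⁆ = 0`; in particular
`g` is solvable. -/
theorem case_two_half_solvable
    (n : ℕ) (hn : 4 ≤ n) (L : Type*) [LieRing L] [LieAlgebra ℝ L]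
    (b : Module.Basis (Fin n) ℝ L)
    (h12 : ⁅b ⟨0, by omega⟩, b ⟨1, by omega⟩⁆ ∈ Submodule.span ℝ {b ⟨1, by omega⟩})
    (h13 : ⁅b ⟨0, by omega⟩, b ⟨2, by omega⟩⁆ ∈ Submodule.span ℝ
      ({b ⟨1, by omega⟩, b ⟨3, by omega⟩} ∪ b '' {j : Fin n | 4 ≤ (j : ℕ)}))
    (h14 : ⁅b ⟨0, by omega⟩, b ⟨3, by omega⟩⁆ ∈ Submodule.span ℝ
      ({b ⟨1, by omega⟩} ∪ b '' {j : Fin n | 4 ≤ (j : ℕ)}))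
    (h1i : ∀ i : Fin n, 4 ≤ (i : ℕ) → ⁅b ⟨0, by omega⟩, b i⁆ ∈ Submodule.span ℝ
      ({b ⟨1, by omega⟩, b ⟨2, by omega⟩, b ⟨3, by omega⟩} ∪ b '' {j : Fin n | 4 ≤ (j : ℕ)}))
    (h23 : ⁅b ⟨1, by omega⟩, b ⟨2, by omega⟩⁆ = 0)
    (h24 : ⁅b ⟨1, by omega⟩, b ⟨3, by omega⟩⁆ = 0)
    (h2i : ∀ i : Fin n, 4 ≤ (i : ℕ) → ⁅b ⟨1, by omega⟩, b i⁆ = 0)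
    (h34 : ⁅b ⟨2, by omega⟩, b ⟨3, by omega⟩⁆ ∈ Submodule.span ℝ {b ⟨1, by omega⟩})
    (h3i : ∀ i : Fin n, 4 ≤ (i : ℕ) →
      ⁅b ⟨2, by omega⟩, b i⁆ ∈ Submodule.span ℝ {b ⟨1, by omega⟩, b ⟨3, by omega⟩})
    (h4i : ∀ i : Fin n, 4 ≤ (i : ℕ) →
      ⁅b ⟨3, by omega⟩, b i⁆ ∈ Submodule.span ℝ {b ⟨1, by omega⟩})
    (hij : ∀ i j : Fin n, 4 ≤ (i : ℕ) → 4 ≤ (j : ℕ) →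
      ⁅b i, b j⁆ ∈ Submodule.span ℝ {b ⟨1, by omega⟩}) :
    (∀ z ∈ LieAlgebra.derivedSeries ℝ L 1, z ∈ Submodule.span ℝ
      ({b ⟨1, by omega⟩, b ⟨2, by omega⟩, b ⟨3, by omega⟩} ∪ b '' {j : Fin n | 4 ≤ (j : ℕ)})) ∧
    (∀ z ∈ LieAlgebra.derivedSeries ℝ L 2,
      z ∈ Submodule.span ℝ {b ⟨1, by omega⟩, b ⟨3, by omega⟩}) ∧
    (∀ z ∈ ⁅LieAlgebra.derivedSeries ℝ L 1, LieAlgebra.derivedSeries ℝ L 2⁆,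
      z ∈ Submodule.span ℝ {b ⟨1, by omega⟩}) ∧
    ⁅LieAlgebra.derivedSeries ℝ L 1,
      ⁅LieAlgebra.derivedSeries ℝ L 1, LieAlgebra.derivedSeries ℝ L 2⁆⁆ =
        (⊥ : LieIdeal ℝ L) ∧
    LieAlgebra.IsSolvable L := by
  obtain ⟨m, rfl⟩ := Nat.exists_eq_add_of_le' hn
  obtain ⟨h₁, h₂, h₃, h₄⟩ := derivedSeries_le_depthFiltration b
    (d := fun i : Fin (m + 4) ↦ frameDepth i) (frame_lie_mem_of_depth_eq_zero h12 h13 h14 h1i)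
    (lie_mem_depthFiltration_add_of_lt fun i j hlt hi _ ↦
      frame_lie_mem_add_of_lt h23 h24 h2i h34 h3i h4i hij i j hlt hi)
  have hbot : ⁅LieAlgebra.derivedSeries ℝ L 1,
      ⁅LieAlgebra.derivedSeries ℝ L 1, LieAlgebra.derivedSeries ℝ L 2⁆⁆ = ⊥ := by
    rw [frame_depthFiltration_four, le_bot_iff, LieSubmodule.toSubmodule_eq_bot] at h₄
    exact h₄
  exact ⟨fun z hz ↦ frame_depthFiltration_one_le (h₁ hz),
    fun z hz ↦ frame_depthFiltration_two_le (h₂ hz),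
    fun z hz ↦ frame_depthFiltration_three_le (h₃ hz), hbot,
    LieAlgebra.IsSolvable.mk (k := 4) (eq_bot_iff.mpr (hbot ▸ derivedSeries_four_le (R := ℝ)))⟩
end

section
/- Let V be a 2p+k dimensional vector space with null basis {e₁,…,e_{2p}, e_{2p+1},…,e_{2p+k}} and a Lie bracket whose structure constants C^c_{ab} are supported on boost weights (b₁,…,b_p) satisfying x₁b₁ + … + x_pb_p ≤ −1 for some positive reals x₁ ≥ x₂ ≥ … ≥ x_p > 0. Then the subspaces N₊ = span{e₂,e₄,…,e_{2p}} and N₊ ⊕ H with H = span{e_{2p+1},…,e_{2p+k}} are subalgebras: [N₊,N₊] ⊆ N₊, [N₊,H] ⊆ N₊, and [H,H] ⊆ N₊. -/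
/-!
A minus or spatial index has boost weight `≤ 0` in every slot, while every index outside `N₊`
has boost weight `≥ 0`. Hence a structure constant `C^c_{ab}` with `a, b` minus or spatial and
`c ∉ N₊` has weight `wt c - wt a - wt b` with nonnegative entries, so its pairing with the
positive vector `x` is `≥ 0 > -1`, and the constant vanishes: `[e a, e b]` only involves `N₊`.
-/

theorem sum_smul_mem_span_image {ι R M : Type*} [Fintype ι] [Semiring R] [AddCommMonoid M]
    [Module R M] (v : ι → M) {s : Set ι} {f : ι → R} (hf : ∀ i, f i ≠ 0 → i ∈ s) :
    ∑ i, f i • v i ∈ Submodule.span R (v '' s) := by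
  refine Submodule.sum_mem _ fun i _ => ?_
  by_cases hi : f i = 0
  · simp [hi]
  · exact Submodule.smul_mem _ _ (Submodule.subset_span ⟨i, hf i hi, rfl⟩)

theorem not_sum_mul_le_neg_one {ι : Type*} [Fintype ι] {x w : ι → ℝ} (hx : ∀ i, 0 ≤ x i)
    (hw : ∀ i, 0 ≤ w i) : ¬ ∑ i, x i * w i ≤ -1 := by
  have : 0 ≤ ∑ i, x i * w i := Finset.sum_nonneg fun i _ => mul_nonneg (hx i) (hw i)
  linarith

/-- Indices are 0-based: `a = 2 * i` is the paper's `e_{2i+1}`, of `(i+1)`-th weight `+1`. -/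
def boostWeight (a i : ℕ) : ℤ :=
  if a = 2 * i then 1 else if a = 2 * i + 1 then -1 else 0

theorem boostWeight_nonpos {p a i : ℕ} (hi : i < p) (ha : (a % 2 = 1 ∧ a < 2 * p) ∨ 2 * p ≤ a) :
    boostWeight a i ≤ 0 := by
  unfold boostWeight
  split_ifs <;> omega

theorem boostWeight_nonneg {p a i : ℕ} (hi : i < p) (ha : ¬ (a % 2 = 1 ∧ a < 2 * p)) :
    0 ≤ boostWeight a i := by
  unfold boostWeight
  split_ifs <;> omega

theorem null_cone_plus_distribution_subalgebra_general
    (p k : ℕ)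
    (V : Type*) [AddCommGroup V] [Module ℝ V]
    (e : Module.Basis (Fin (2 * p + k)) ℝ V)
    (μ : V →ₗ[ℝ] V →ₗ[ℝ] V)
    (C : Fin (2 * p + k) → Fin (2 * p + k) → Fin (2 * p + k) → ℝ)
    (hμ : ∀ a b : Fin (2 * p + k), μ (e a) (e b) = ∑ c, C c a b • e c)
    (x : Fin p → ℝ) (hxpos : ∀ i, 0 < x i)
    (wt : Fin (2 * p + k) → Fin p → ℤ)
    (hwt : ∀ a : Fin (2 * p + k), ∀ i : Fin p,
      wt a i = if (a : ℕ) = 2 * (i : ℕ) then 1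
        else if (a : ℕ) = 2 * (i : ℕ) + 1 then -1 else 0)
    (hsupp : ∀ c a b : Fin (2 * p + k), C c a b ≠ 0 →
      ∑ i, x i * ((wt c i : ℝ) - (wt a i : ℝ) - (wt b i : ℝ)) ≤ -1) :
    (∀ a b : Fin (2 * p + k),
      ((a : ℕ) % 2 = 1 ∧ (a : ℕ) < 2 * p) → ((b : ℕ) % 2 = 1 ∧ (b : ℕ) < 2 * p) →
      μ (e a) (e b) ∈
        Submodule.span ℝ (e '' {c : Fin (2 * p + k) | (c : ℕ) % 2 = 1 ∧ (c : ℕ) < 2 * p})) ∧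
    (∀ a b : Fin (2 * p + k),
      ((a : ℕ) % 2 = 1 ∧ (a : ℕ) < 2 * p) → 2 * p ≤ (b : ℕ) →
      μ (e a) (e b) ∈
        Submodule.span ℝ (e '' {c : Fin (2 * p + k) | (c : ℕ) % 2 = 1 ∧ (c : ℕ) < 2 * p})) ∧
    (∀ a b : Fin (2 * p + k),
      2 * p ≤ (a : ℕ) → 2 * p ≤ (b : ℕ) →
      μ (e a) (e b) ∈
        Submodule.span ℝ (e '' {c : Fin (2 * p + k) | (c : ℕ) % 2 = 1 ∧ (c : ℕ) < 2 * p})) := by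
  have hwt' (a : Fin (2 * p + k)) (i : Fin p) : wt a i = boostWeight a i := hwt a i
  have key (a b : Fin (2 * p + k)) (ha : ((a : ℕ) % 2 = 1 ∧ (a : ℕ) < 2 * p) ∨ 2 * p ≤ (a : ℕ))
      (hb : ((b : ℕ) % 2 = 1 ∧ (b : ℕ) < 2 * p) ∨ 2 * p ≤ (b : ℕ)) :
      μ (e a) (e b) ∈
        Submodule.span ℝ (e '' {c : Fin (2 * p + k) | (c : ℕ) % 2 = 1 ∧ (c : ℕ) < 2 * p}) := by
    rw [hμ]
    refine sum_smul_mem_span_image _ fun c hc => by_contra fun hcn => ?_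
    refine not_sum_mul_le_neg_one (fun i => (hxpos i).le) (fun i => ?_) (hsupp c a b hc)
    have hwa : (boostWeight a i : ℝ) ≤ 0 := by exact_mod_cast boostWeight_nonpos i.isLt ha
    have hwb : (boostWeight b i : ℝ) ≤ 0 := by exact_mod_cast boostWeight_nonpos i.isLt hb
    have hwc : 0 ≤ (boostWeight c i : ℝ) := by exact_mod_cast boostWeight_nonneg i.isLt hcn
    rw [hwt', hwt', hwt']
    linarith
  exact ⟨fun a b ha hb => key a b (.inl ha) (.inl hb), fun a b ha hb => key a b (.inl ha) (.inr hb),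
    fun a b ha hb => key a b (.inr ha) (.inr hb)⟩

/-- Let `V` be `(2p+k)`-dimensional with null basis
`e₁,…,e_{2p},e_{2p+1},…,e_{2p+k}` (0-indexed: `e a` for `a : Fin (2p+k)`; the index
`a = 2i` carries `i`-th boost weight `+1`, `a = 2i+1` carries `−1`, and `a ≥ 2p` carries
weight `0`). Suppose the bracket `μ` has structure constants `C c a b`
(`μ(e a, e b) = Σ_c C c a b • e c`) supported on boost weights
`wt(c) − wt(a) − wt(b)` satisfying `x₁b₁ + … + x_p b_p ≤ −1` for positive reals
`x₁ ≥ … ≥ x_p > 0`. Then with `N₊ = span{e₂,e₄,…,e_{2p}}` (odd 0-indices `< 2p`) and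
`H = span{e_{2p+1},…}`, one has `[N₊,N₊] ⊆ N₊`, `[N₊,H] ⊆ N₊`, `[H,H] ⊆ N₊`;
in particular `N₊` and `N₊ ⊕ H` are subalgebras. -/
theorem null_cone_plus_distribution_subalgebra
    (p k : ℕ) (hp : 0 < p)
    (V : Type*) [AddCommGroup V] [Module ℝ V]
    (e : Module.Basis (Fin (2 * p + k)) ℝ V)
    (μ : V →ₗ[ℝ] V →ₗ[ℝ] V)
    (halt : ∀ x y : V, μ x y = - μ y x)
    (C : Fin (2 * p + k) → Fin (2 * p + k) → Fin (2 * p + k) → ℝ)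
    (hμ : ∀ a b : Fin (2 * p + k), μ (e a) (e b) = ∑ c, C c a b • e c)
    (x : Fin p → ℝ) (hxpos : ∀ i, 0 < x i)
    (hxmono : ∀ i j : Fin p, i ≤ j → x j ≤ x i)
    (wt : Fin (2 * p + k) → Fin p → ℤ)
    (hwt : ∀ a : Fin (2 * p + k), ∀ i : Fin p,
      wt a i = if (a : ℕ) = 2 * (i : ℕ) then 1
        else if (a : ℕ) = 2 * (i : ℕ) + 1 then -1 else 0)
    (hsupp : ∀ c a b : Fin (2 * p + k), C c a b ≠ 0 →
      ∑ i, x i * ((wt c i : ℝ) - (wt a i : ℝ) - (wt b i : ℝ)) ≤ -1) :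
    (∀ a b : Fin (2 * p + k),
      ((a : ℕ) % 2 = 1 ∧ (a : ℕ) < 2 * p) → ((b : ℕ) % 2 = 1 ∧ (b : ℕ) < 2 * p) →
      μ (e a) (e b) ∈
        Submodule.span ℝ (e '' {c : Fin (2 * p + k) | (c : ℕ) % 2 = 1 ∧ (c : ℕ) < 2 * p})) ∧
    (∀ a b : Fin (2 * p + k),
      ((a : ℕ) % 2 = 1 ∧ (a : ℕ) < 2 * p) → 2 * p ≤ (b : ℕ) →
      μ (e a) (e b) ∈
        Submodule.span ℝ (e '' {c : Fin (2 * p + k) | (c : ℕ) % 2 = 1 ∧ (c : ℕ) < 2 * p})) ∧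
    (∀ a b : Fin (2 * p + k),
      2 * p ≤ (a : ℕ) → 2 * p ≤ (b : ℕ) →
      μ (e a) (e b) ∈
        Submodule.span ℝ (e '' {c : Fin (2 * p + k) | (c : ℕ) % 2 = 1 ∧ (c : ℕ) < 2 * p})) :=
  null_cone_plus_distribution_subalgebra_general p k V e μ C hμ x hxpos wt hwt hsupp
end
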